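/- Assume d is bounded with θ ≤ 1, so that both d_E and d_Em are metrics on E. Then d_E and d_Em induce the same topology on E. -/

import Mathlib

/-- `ρ` is a metric: zero iff equal, symmetric, triangle inequality. -/
def IsMetric {α : Type*} (ρ : α → α → ℝ) : Prop :=
  (∀ x y, ρ x y = 0 ↔ x = y) ∧ (∀ x y, ρ x y = ρ y x) ∧
    ∀ x y z, ρ x z ≤ ρ x y + ρ y z

def IsCauchyWith {α : Type*} (ρ : α → α → ℝ) (S : ℕ → α) : Prop :=
  ∀ ε : ℝ, 0 < ε → ∃ N : ℕ, ∀ m ≥ N, ∀ n ≥ N, ρ (S m) (S n) < ε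

def TendsToWith {α : Type*} (ρ : α → α → ℝ) (S : ℕ → α) (l : α) : Prop :=
  ∀ ε : ℝ, 0 < ε → ∃ N : ℕ, ∀ n ≥ N, ρ (S n) l < ε

def IsCompleteWith {α : Type*} (ρ : α → α → ℝ) : Prop :=
  ∀ S : ℕ → α, IsCauchyWith ρ S → ∃ l, TendsToWith ρ S l

/-- the topology generated by the open balls of `ρ` -/
def topOf {α : Type*} (ρ : α → α → ℝ) : TopologicalSpace α :=
  TopologicalSpace.generateFrom {s | ∃ (x : α) (ε : ℝ), s = {y | ρ x y < ε}}

/-- `sup d`, the supremum of all distances in `X` -/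
noncomputable def supD (X : Type*) [MetricSpace X] : ℝ :=
  sSup {r : ℝ | ∃ x y : X, dist x y = r}

/-- The multiset distance `d_E`: enumerate `a` and `c` with multiplicity in all possible
orders; the shorter enumeration is matched against an initial part of the other, taking
the sum of the distances of matched pairs plus the notional part `M * |C(c) - C(a)|`;
`d_E` is the least such value. -/
noncomputable def dE {X : Type*} [MetricSpace X] (M : ℝ) (a c : Multiset X) : ℝ :=
  sInf {r : ℝ | ∃ la lc : List X, (la : Multiset X) = a ∧ (lc : Multiset X) = c ∧
    r = (List.zipWith dist la lc).sum + M * |(c.card : ℝ) - (a.card : ℝ)|}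

/-- `d_Em`, the mean version of `d_E` (equal to `0` on the pair of empty multisets). -/
noncomputable def dEm {X : Type*} [MetricSpace X] (M : ℝ) (a c : Multiset X) : ℝ :=
  dE M a c / (max a.card c.card : ℕ)

/-! When `dist ≤ M`, every partial matching between `a` and `c` (matched pairs pay their
distance, unmatched points pay `M`) bounds `d_E a c` from above, and every enumeration in the
definition of `d_E` is such a matching. Composing two matchings through the common part of the
middle multiset gives the triangle inequality for `d_E`.

A `d_E`-ball of radius `< M`, or a `d_Em`-ball of radius `< M / (C(z) + 1)`, around `z` only
contains multisets of cardinality `C(z)`, and there `d_E = C(z) · d_Em`; so around every point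
small balls of either distance fit inside any ball of the other. -/

section Matching

variable {α β : Type*}

def IsPartialMatching (a : Multiset α) (c : Multiset β) (p : Multiset (α × β)) : Prop :=
  p.map Prod.fst ≤ a ∧ p.map Prod.snd ≤ c

lemma isPartialMatching_zip (la : List α) (lc : List β) :
    IsPartialMatching (la : Multiset α) (lc : Multiset β) (la.zip lc : Multiset (α × β)) := by
  rw [List.zip_eq_zip_take_min]
  constructor <;> simp only [Multiset.map_coe, Multiset.coe_le]
  · rw [List.map_fst_zip (by simp)]
    exact (List.take_sublist _ _).subperm
  · rw [List.map_snd_zip (by simp)]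
    exact (List.take_sublist _ _).subperm

lemma Multiset.exists_coe_le_map_eq {f : α → β} :
    ∀ (lw : List β) {p : Multiset α}, (lw : Multiset β) ≤ p.map f →
      ∃ l : List α, (l : Multiset α) ≤ p ∧ l.map f = lw
  | [], _, _ => ⟨[], Multiset.zero_le _, rfl⟩
  | y :: lw, p, h => by
    classical
    obtain ⟨e, he, rfl⟩ := Multiset.mem_map.1 (Multiset.mem_of_le h (List.mem_cons_self ..))
    rw [← Multiset.cons_erase he, Multiset.map_cons, ← Multiset.cons_coe,
      Multiset.cons_le_cons_iff] at h
    obtain ⟨l, hl, hlw⟩ := exists_coe_le_map_eq lw h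
    refine ⟨e :: l, ?_, by rw [List.map_cons, hlw]⟩
    rw [← Multiset.cons_coe, ← Multiset.cons_erase he]
    exact Multiset.cons_le_cons e hl

end Matching

section PairDist

variable {X : Type*} [PseudoMetricSpace X]

def pairDistSum (p : Multiset (X × X)) : ℝ :=
  (p.map fun e => dist e.1 e.2).sum

lemma pairDistSum_nonneg (p : Multiset (X × X)) : 0 ≤ pairDistSum p :=
  Multiset.sum_nonneg fun _ h => by
    obtain ⟨e, -, rfl⟩ := Multiset.mem_map.1 h
    exact dist_nonneg

lemma pairDistSum_mono {p q : Multiset (X × X)} (h : p ≤ q) : pairDistSum p ≤ pairDistSum q := by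
  obtain ⟨s, rfl⟩ := Multiset.le_iff_exists_add.1 h
  simpa [pairDistSum] using pairDistSum_nonneg s

lemma exists_comp_of_map_snd_eq :
    ∀ (lp lq : List (X × X)), lp.map Prod.snd = lq.map Prod.fst →
      ∃ lr : List (X × X), lr.map Prod.fst = lp.map Prod.fst ∧
        lr.map Prod.snd = lq.map Prod.snd ∧
        pairDistSum (lr : Multiset (X × X))
          ≤ pairDistSum (lp : Multiset (X × X)) + pairDistSum (lq : Multiset (X × X))
  | [], [], _ => ⟨[], rfl, rfl, by simp [pairDistSum]⟩
  | [], _ :: _, h | _ :: _, [], h => by simp at h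
  | e :: lp, g :: lq, h => by
    obtain ⟨hmid, h⟩ := List.cons_eq_cons.1 h
    obtain ⟨lr, hfst, hsnd, hsum⟩ := exists_comp_of_map_snd_eq lp lq h
    refine ⟨(e.1, g.2) :: lr, by simp [hfst], by simp [hsnd], ?_⟩
    have htri : dist e.1 g.2 ≤ dist e.1 e.2 + dist g.1 g.2 := hmid ▸ dist_triangle _ _ _
    simp only [pairDistSum, Multiset.map_coe, Multiset.sum_coe, List.map_cons,
      List.sum_cons] at hsum ⊢
    linarith

lemma IsPartialMatching.exists_comp {a b c : Multiset X} {p q : Multiset (X × X)}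
    (hp : IsPartialMatching a b p) (hq : IsPartialMatching b c q) :
    ∃ r, IsPartialMatching a c r ∧ pairDistSum r ≤ pairDistSum p + pairDistSum q ∧
      p.card + q.card ≤ r.card + b.card := by
  classical
  set w := p.map Prod.snd ∩ q.map Prod.fst with hw
  obtain ⟨lp, hlp, hlpw⟩ :=
    Multiset.exists_coe_le_map_eq w.toList (by simpa using Multiset.inter_le_left)
  obtain ⟨lq, hlq, hlqw⟩ :=
    Multiset.exists_coe_le_map_eq w.toList (by simpa using Multiset.inter_le_right)
  obtain ⟨lr, hfst, hsnd, hsum⟩ := exists_comp_of_map_snd_eq lp lq (hlpw.trans hlqw.symm)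
  refine ⟨lr, ⟨?_, ?_⟩, ?_, ?_⟩
  · rw [Multiset.map_coe, hfst, ← Multiset.map_coe]
    exact (Multiset.map_le_map hlp).trans hp.1
  · rw [Multiset.map_coe, hsnd, ← Multiset.map_coe]
    exact (Multiset.map_le_map hlq).trans hq.2
  · exact hsum.trans (add_le_add (pairDistSum_mono hlp) (pairDistSum_mono hlq))
  · have hunion : (p.map Prod.snd ∪ q.map Prod.fst).card ≤ b.card :=
      Multiset.card_le_card (Multiset.union_le hp.2 hq.1)
    have hcard :=
      congrArg Multiset.card (Multiset.union_add_inter (p.map Prod.snd) (q.map Prod.fst))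
    rw [Multiset.card_add, Multiset.card_add, ← hw, Multiset.card_map, Multiset.card_map] at hcard
    have hlr : (lr : Multiset (X × X)).card = w.card := by
      rw [Multiset.coe_card, ← List.length_map (f := Prod.fst), hfst, List.length_map,
        ← List.length_map (f := Prod.snd), hlpw, Multiset.length_toList]
    omega

end PairDist

section MultisetDistance

variable {X : Type*} [MetricSpace X] {M : ℝ}

def matchingCost (M : ℝ) (a c : Multiset X) (p : Multiset (X × X)) : ℝ :=
  pairDistSum p + M * ((a.card : ℝ) - p.card) + M * ((c.card : ℝ) - p.card)

lemma sum_zipWith_dist (la lc : List X) :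
    (List.zipWith dist la lc).sum = pairDistSum (la.zip lc : Multiset (X × X)) := by
  simp [pairDistSum, ← List.map_uncurry_zip_eq_zipWith, Function.uncurry_def]

lemma pairDistSum_le_card_mul (hd : ∀ x y : X, dist x y ≤ M) (p : Multiset (X × X)) :
    pairDistSum p ≤ p.card * M := by
  have hle : ∀ r ∈ p.map fun e => dist e.1 e.2, r ≤ M := by
    simp only [Multiset.mem_map]
    rintro _ ⟨e, -, rfl⟩
    exact hd _ _
  simpa [pairDistSum] using Multiset.sum_le_card_nsmul _ M hle

lemma dE_le (hM : 0 ≤ M) {a c : Multiset X} {la lc : List X} (ha : (la : Multiset X) = a)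
    (hc : (lc : Multiset X) = c) :
    dE M a c ≤ (List.zipWith dist la lc).sum + M * |(c.card : ℝ) - a.card| := by
  refine csInf_le ⟨0, ?_⟩ ⟨la, lc, ha, hc, rfl⟩
  rintro r ⟨la, lc, -, -, rfl⟩
  rw [sum_zipWith_dist]
  have := pairDistSum_nonneg (la.zip lc : Multiset (X × X))
  positivity

lemma le_dE {a c : Multiset X} {t : ℝ}
    (h : ∀ la lc : List X, (la : Multiset X) = a → (lc : Multiset X) = c →
      t ≤ (List.zipWith dist la lc).sum + M * |(c.card : ℝ) - a.card|) :
    t ≤ dE M a c :=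
  le_csInf ⟨_, a.toList, c.toList, a.coe_toList, c.coe_toList, rfl⟩
    (by rintro r ⟨la, lc, ha, hc, rfl⟩; exact h la lc ha hc)

lemma mul_abs_card_sub_le_dE (a c : Multiset X) : M * |(c.card : ℝ) - a.card| ≤ dE M a c :=
  le_dE fun la lc _ _ => by
    rw [sum_zipWith_dist]
    linarith [pairDistSum_nonneg (la.zip lc : Multiset (X × X))]

lemma dE_nonneg (hM : 0 ≤ M) (a c : Multiset X) : 0 ≤ dE M a c :=
  (by positivity : 0 ≤ M * |(c.card : ℝ) - a.card|).trans (mul_abs_card_sub_le_dE a c)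

lemma dE_self (hM : 0 ≤ M) (a : Multiset X) : dE M a a = 0 :=
  le_antisymm (by simpa [List.zipWith_self] using dE_le hM a.coe_toList a.coe_toList)
    (dE_nonneg hM a a)

lemma card_eq_of_dE_lt (hM : 0 ≤ M) {a c : Multiset X} (h : dE M a c < M) :
    a.card = c.card := by
  have hlt : M * |(c.card : ℝ) - a.card| < M * 1 := by
    linarith [mul_abs_card_sub_le_dE (M := M) a c]
  have : |((c.card : ℤ) - a.card)| < 1 := by
    exact_mod_cast lt_of_mul_lt_mul_left hlt hM
  rw [abs_lt] at this
  omega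

lemma matchingCost_zip {a c : Multiset X} {la lc : List X} (ha : (la : Multiset X) = a)
    (hc : (lc : Multiset X) = c) :
    matchingCost M a c (la.zip lc : Multiset (X × X))
      = (List.zipWith dist la lc).sum + M * |(c.card : ℝ) - a.card| := by
  subst ha hc
  simp only [matchingCost, sum_zipWith_dist, Multiset.coe_card, List.length_zip]
  rcases le_total la.length lc.length with h | h
  · rw [min_eq_left h, abs_of_nonneg (by simpa using h)]; ring
  · rw [min_eq_right h, abs_of_nonpos (by simpa using h)]; ring

/-- Matching more pairs only helps: a matched pair costs at most `M`, while leaving both of its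
points unmatched costs `2 * M`. -/
lemma dE_le_matchingCost (hM : 0 ≤ M) (hd : ∀ x y : X, dist x y ≤ M) {a c : Multiset X}
    {p : Multiset (X × X)} (hp : IsPartialMatching a c p) :
    dE M a c ≤ matchingCost M a c p := by
  classical
  set ra := (a - p.map Prod.fst).toList
  set rc := (c - p.map Prod.snd).toList
  have ha : ((p.toList.map Prod.fst ++ ra : List X) : Multiset X) = a := by
    rw [← Multiset.coe_add, ← Multiset.map_coe, Multiset.coe_toList, Multiset.coe_toList,
      add_tsub_cancel_of_le hp.1]
  have hc : ((p.toList.map Prod.snd ++ rc : List X) : Multiset X) = c := by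
    rw [← Multiset.coe_add, ← Multiset.map_coe, Multiset.coe_toList, Multiset.coe_toList,
      add_tsub_cancel_of_le hp.2]
  refine (dE_le hM ha hc).trans ?_
  have hpa : p.card + ra.length = a.card := by
    simpa [ra] using congrArg Multiset.card ha
  have hpc : p.card + rc.length = c.card := by
    simpa [rc] using congrArg Multiset.card hc
  have hmatched : (List.zipWith dist (p.toList.map Prod.fst) (p.toList.map Prod.snd)).sum
      = pairDistSum p := by
    simp [List.zipWith_map, pairDistSum]
  have hrest : (List.zipWith dist ra rc).sum ≤ min ra.length rc.length * M := by
    simpa [sum_zipWith_dist] using pairDistSum_le_card_mul hd (ra.zip rc : Multiset (X × X))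
  have hmin : ((min ra.length rc.length : ℕ) : ℝ) + |(rc.length : ℝ) - ra.length|
      ≤ ra.length + rc.length := by
    rw [Nat.cast_min, ← max_sub_min_eq_abs', min_comm]
    linarith [max_le_add_of_nonneg (Nat.cast_nonneg (α := ℝ) rc.length)
      (Nat.cast_nonneg (α := ℝ) ra.length)]
  rw [List.zipWith_append (by simp), List.sum_append, hmatched, matchingCost, ← hpa, ← hpc]
  push_cast
  rw [add_sub_add_left_eq_sub]
  linarith [mul_le_mul_of_nonneg_left hmin hM]

lemma IsPartialMatching.exists_matchingCost_le (hM : 0 ≤ M) {a b c : Multiset X}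
    {p q : Multiset (X × X)} (hp : IsPartialMatching a b p) (hq : IsPartialMatching b c q) :
    ∃ r, IsPartialMatching a c r ∧
      matchingCost M a c r ≤ matchingCost M a b p + matchingCost M b c q := by
  obtain ⟨r, hr, hsum, hcard⟩ := hp.exists_comp hq
  refine ⟨r, hr, ?_⟩
  have hcard' : M * (p.card + q.card) ≤ M * (r.card + b.card) :=
    mul_le_mul_of_nonneg_left (by exact_mod_cast hcard) hM
  simp only [matchingCost]
  linarith

lemma dE_triangle (hM : 0 ≤ M) (hd : ∀ x y : X, dist x y ≤ M) (a b c : Multiset X) :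
    dE M a c ≤ dE M a b + dE M b c := by
  suffices h : dE M a c - dE M a b ≤ dE M b c by linarith
  refine le_dE fun lb lc hb hc => ?_
  suffices h : dE M a c - ((List.zipWith dist lb lc).sum + M * |(c.card : ℝ) - b.card|)
      ≤ dE M a b by linarith
  refine le_dE fun la lb' ha hb' => ?_
  rw [← matchingCost_zip ha hb', ← matchingCost_zip hb hc]
  obtain ⟨r, hr, hcost⟩ := (ha ▸ hb' ▸ isPartialMatching_zip la lb').exists_matchingCost_le hM
    (hb ▸ hc ▸ isPartialMatching_zip lb lc)
  linarith [dE_le_matchingCost hM hd hr]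

lemma dEm_nonneg (hM : 0 ≤ M) (a c : Multiset X) : 0 ≤ dEm M a c :=
  div_nonneg (dE_nonneg hM a c) (Nat.cast_nonneg _)

lemma dEm_le_dE (hM : 0 ≤ M) (a c : Multiset X) : dEm M a c ≤ dE M a c := by
  rcases Nat.eq_zero_or_pos (max a.card c.card) with h | h
  · simpa [dEm, h] using dE_nonneg hM a c
  · exact div_le_self (dE_nonneg hM a c) (by exact_mod_cast h)

lemma dE_eq_dEm_mul_card (hM : 0 ≤ M) {a c : Multiset X} (h : a.card = c.card) :
    dE M a c = dEm M a c * a.card := by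
  rcases Nat.eq_zero_or_pos a.card with h0 | hpos
  · rw [Multiset.card_eq_zero.1 h0, Multiset.card_eq_zero.1 (h.symm.trans h0), dE_self hM]
    simp
  · rw [dEm, ← h, max_self, div_mul_cancel₀ _ (by positivity)]

lemma dEm_le_dEm_add_dEm (hM : 0 ≤ M) (hd : ∀ x y : X, dist x y ≤ M) (x : Multiset X)
    {z y : Multiset X} (h : z.card = y.card) : dEm M x y ≤ dEm M x z + dEm M z y := by
  rcases Nat.eq_zero_or_pos z.card with h0 | hpos
  · rw [Multiset.card_eq_zero.1 (h.symm.trans h0), Multiset.card_eq_zero.1 h0]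
    linarith [dEm_nonneg hM 0 (0 : Multiset X)]
  calc dEm M x y = dE M x y / (max x.card z.card : ℕ) := by rw [dEm, h]
    _ ≤ (dE M x z + dE M z y) / (max x.card z.card : ℕ) := by
      gcongr; exact dE_triangle hM hd x z y
    _ = dEm M x z + dE M z y / (max x.card z.card : ℕ) := by rw [add_div, dEm]
    _ ≤ dEm M x z + dEm M z y := by
      rw [dEm.eq_1 M z y, ← h, max_self]
      gcongr
      · exact dE_nonneg hM z y
      · exact_mod_cast le_max_right _ _

lemma div_card_add_one_le_dEm (hM : 0 ≤ M) {a c : Multiset X} (h : a.card ≠ c.card) :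
    M / (a.card + 1) ≤ dEm M a c := by
  have hmax : (0 : ℝ) < (max a.card c.card : ℕ) := by
    have : 0 < max a.card c.card := by omega
    exact_mod_cast this
  have hgap : ((max a.card c.card : ℕ) : ℝ) ≤ |(c.card : ℝ) - a.card| * (a.card + 1) := by
    rcases lt_or_gt_of_ne h with hlt | hlt
    · have hlt' : (a.card : ℝ) + 1 ≤ c.card := by exact_mod_cast hlt
      rw [Nat.cast_max, max_eq_right (by linarith), abs_of_pos (by linarith)]
      nlinarith [Nat.cast_nonneg (α := ℝ) a.card]
    · have hlt' : (c.card : ℝ) + 1 ≤ a.card := by exact_mod_cast hlt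
      rw [Nat.cast_max, max_eq_left (by linarith), abs_of_neg (by linarith)]
      nlinarith [Nat.cast_nonneg (α := ℝ) c.card]
  rw [dEm, div_le_div_iff₀ (by positivity) hmax]
  calc M * (max a.card c.card : ℕ) ≤ M * |(c.card : ℝ) - a.card| * (a.card + 1) := by
        rw [mul_assoc]; exact mul_le_mul_of_nonneg_left hgap hM
    _ ≤ dE M a c * (a.card + 1) := by gcongr; exact mul_abs_card_sub_le_dE a c

end MultisetDistance

lemma topOf_le_topOf {α : Type*} {ρ σ : α → α → ℝ}
    (h : ∀ x ε z, σ x z < ε → ∃ δ, ρ z z < δ ∧ ∀ y, ρ z y < δ → σ x y < ε) :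
    topOf ρ ≤ topOf σ := by
  refine le_generateFrom ?_
  rintro _ ⟨x, ε, rfl⟩
  let := topOf ρ
  refine isOpen_iff_forall_mem_open.2 fun z hz => ?_
  obtain ⟨δ, hzδ, hδ⟩ := h x ε z hz
  exact ⟨_, hδ, TopologicalSpace.isOpen_generateFrom_of_mem ⟨z, δ, rfl⟩, hzδ⟩

section Topology

variable {X : Type*} [MetricSpace X] {M : ℝ}

lemma topOf_dE_le_topOf_dEm (hM : 0 < M) (hd : ∀ x y : X, dist x y ≤ M) :
    topOf (dE (X := X) M) ≤ topOf (dEm M) := by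
  refine topOf_le_topOf fun x ε z hz => ⟨min M (ε - dEm M x z), ?_, fun y hy => ?_⟩
  · rw [dE_self hM.le]
    exact lt_min hM (sub_pos.2 hz)
  · have hcard := card_eq_of_dE_lt hM.le (hy.trans_le (min_le_left _ _))
    linarith [dEm_le_dEm_add_dEm hM.le hd x hcard, dEm_le_dE hM.le z y,
      hy.trans_le (min_le_right _ _)]

lemma topOf_dEm_le_topOf_dE (hM : 0 < M) (hd : ∀ x y : X, dist x y ≤ M) :
    topOf (dEm (X := X) M) ≤ topOf (dE M) := by
  refine topOf_le_topOf fun x ε z hz =>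
    ⟨min M (ε - dE M x z) / (z.card + 1), ?_, fun y hy => ?_⟩
  · rw [dEm, dE_self hM.le, zero_div]
    exact div_pos (lt_min hM (sub_pos.2 hz)) (by positivity)
  · have hδ : min M (ε - dE M x z) / (z.card + 1) ≤ M / (z.card + 1) := by
      gcongr; exact min_le_left _ _
    have hcard : z.card = y.card := by
      by_contra hne
      exact (hy.trans_le hδ).not_ge (div_card_add_one_le_dEm hM.le hne)
    have hzy : dE M z y < ε - dE M x z :=
      calc dE M z y = dEm M z y * z.card := dE_eq_dEm_mul_card hM.le hcard
        _ ≤ dEm M z y * (z.card + 1) := by linarith [dEm_nonneg hM.le z y]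
        _ < min M (ε - dE M x z) / (z.card + 1) * (z.card + 1) := by gcongr
        _ ≤ ε - dE M x z := by rw [div_mul_cancel₀ _ (by positivity)]; exact min_le_right _ _
    linarith [dE_triangle hM.le hd x z y]

end Topology

lemma dist_le_of_supD_div_le_one {X : Type*} [MetricSpace X] {M : ℝ} (hM : 0 < M)
    (hbdd : ∃ B : ℝ, ∀ x y : X, dist x y ≤ B) (htheta : supD X / M ≤ 1) (x y : X) :
    dist x y ≤ M := by
  obtain ⟨B, hB⟩ := hbdd
  have hbddAbove : BddAbove {r : ℝ | ∃ x y : X, dist x y = r} :=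
    ⟨B, by rintro _ ⟨u, v, rfl⟩; exact hB u v⟩
  exact (le_csSup hbddAbove ⟨x, y, rfl⟩).trans ((div_le_one hM).1 htheta)

theorem stmt_7_general {X : Type*} [MetricSpace X] (M : ℝ) (hM : 0 < M)
    (hbdd : ∃ B : ℝ, ∀ x y : X, dist x y ≤ B) (htheta : supD X / M ≤ 1) :
    topOf (dE (X := X) M) = topOf (dEm (X := X) M) := by
  have hd := dist_le_of_supD_div_le_one hM hbdd htheta
  exact le_antisymm (topOf_dE_le_topOf_dEm hM hd) (topOf_dEm_le_topOf_dE hM hd)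

/-- For `d` bounded with `(sup d)/M ≤ 1` (so that `d_E` and `d_Em` are metrics),
`d_E` and `d_Em` induce the same topology on `E`. -/
theorem stmt_7 {X : Type*} [MetricSpace X] [Nontrivial X] (M : ℝ) (hM : 0 < M)
    (hbdd : ∃ B : ℝ, ∀ x y : X, dist x y ≤ B) (htheta : supD X / M ≤ 1) :
    topOf (dE (X := X) M) = topOf (dEm (X := X) M) :=
  stmt_7_general M hM hbdd htheta
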